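/- Let U, V, W be Banach spaces, J : V → W an isomorphic embedding with ‖Jv‖ ≥ c‖v‖ for all v, and T_M, and a family {T_N : N ∈ ℬ} ⊆ L(U,V) such that dist(J ∘ T_M, 𝒥^{T_N}(U,W)) ≥ c for every N of the form N = N₁ ∪ ⋯ ∪ Nₙ with N_j ∈ ℬ, where T_{N_j} = Q_{N_j} ∘ T_N. Then dist(J ∘ T_M, 𝒥(ℬ)) ≥ c, where 𝒥(ℬ) is the closed ideal of L(U,W) generated by {T_N : N ∈ ℬ}. -/
import Mathlib


/-- The closed ideal of `L(U,W)` generated by a single operator `T ∈ L(U,V)`. -/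
noncomputable def idealGenSingle {U V W : Type*}
    [NormedAddCommGroup U] [NormedSpace ℝ U]
    [NormedAddCommGroup V] [NormedSpace ℝ V]
    [NormedAddCommGroup W] [NormedSpace ℝ W]
    (T : U →L[ℝ] V) : Set (U →L[ℝ] W) :=
  closure {S | ∃ (n : ℕ) (A : Fin n → V →L[ℝ] W) (B : Fin n → U →L[ℝ] U),
    S = ∑ j, (A j).comp (T.comp (B j))}

/-- The closed ideal of `L(U,W)` generated by a set `𝒯 ⊆ L(U,V)`. -/
noncomputable def idealGenFam {U V W : Type*}
    [NormedAddCommGroup U] [NormedSpace ℝ U]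
    [NormedAddCommGroup V] [NormedSpace ℝ V]
    [NormedAddCommGroup W] [NormedSpace ℝ W]
    (𝒯 : Set (U →L[ℝ] V)) : Set (U →L[ℝ] W) :=
  closure {S | ∃ (n : ℕ) (Top : Fin n → U →L[ℝ] V)
    (A : Fin n → V →L[ℝ] W) (B : Fin n → U →L[ℝ] U),
    (∀ j, Top j ∈ 𝒯) ∧ S = ∑ j, (A j).comp ((Top j).comp (B j))}

/-- If `J : V → W` is an isomorphic embedding with lower bound `c`, and
`dist(J∘T_M, 𝒥^{T_N}(U,W)) ≥ c` for every finite union `N` of members of `ℬ`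
(where `T_{N'} = Q_{N'} ∘ T_N` for `N' ⊆ N`), then
`dist(J∘T_M, 𝒥(ℬ)) ≥ c`. -/
theorem dist_ge_of_dist_ge_on_unions
    (U V W : Type*)
    [NormedAddCommGroup U] [NormedSpace ℝ U] [CompleteSpace U]
    [NormedAddCommGroup V] [NormedSpace ℝ V] [CompleteSpace V]
    [NormedAddCommGroup W] [NormedSpace ℝ W] [CompleteSpace W]
    (J : V →L[ℝ] W) (c : ℝ) (hc : 0 < c)
    (hJ : ∀ v : V, c * ‖v‖ ≤ ‖J v‖)
    (T : Set ℕ → (U →L[ℝ] V)) (Q : Set ℕ → (V →L[ℝ] V))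
    (hQ : ∀ N' N : Set ℕ, N' ⊆ N → (Q N').comp (Q N) = Q N')
    (hTQ : ∀ N' N : Set ℕ, N' ⊆ N → T N' = (Q N').comp (T N))
    (M : Set ℕ) (ℬ : Set (Set ℕ))
    (hdist : ∀ (n : ℕ) (N : Fin n → Set ℕ), (∀ j, N j ∈ ℬ) →
      c ≤ Metric.infDist (J.comp (T M))
        (idealGenSingle (T (⋃ j, N j)) : Set (U →L[ℝ] W))) :
    c ≤ Metric.infDist (J.comp (T M))
      (idealGenFam {T N | N ∈ ℬ} : Set (U →L[ℝ] W)) := by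
  classical
  rw [idealGenFam, Metric.infDist_closure]
  have hne : ({S | ∃ (n : ℕ) (Top : Fin n → U →L[ℝ] V)
      (A : Fin n → V →L[ℝ] W) (B : Fin n → U →L[ℝ] U),
      (∀ j, Top j ∈ {T N | N ∈ ℬ}) ∧ S = ∑ j, (A j).comp ((Top j).comp (B j))} :
      Set (U →L[ℝ] W)).Nonempty :=
    ⟨0, 0, Fin.elim0, Fin.elim0, Fin.elim0, fun j => j.elim0, by simp⟩
  by_contra hlt
  push_neg at hlt
  obtain ⟨S, hS, hSd⟩ := (Metric.infDist_lt_iff hne).1 hlt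
  obtain ⟨n, Top, A, B, hTop, rfl⟩ := hS
  refine absurd hSd (not_lt.2 ?_)
  set N : Fin n → Set ℕ := fun j => (hTop j).choose with hN
  have hNmem : ∀ j, N j ∈ ℬ := fun j => (hTop j).choose_spec.1
  have hNT : ∀ j, T (N j) = Top j := fun j => (hTop j).choose_spec.2
  have hsub : ∀ j, N j ⊆ ⋃ i, N i := fun j => Set.subset_iUnion N j
  have hmem : (∑ j, (A j).comp ((Top j).comp (B j))) ∈
      idealGenSingle (T (⋃ j, N j)) := by
    apply subset_closure
    refine ⟨n, fun j => (A j).comp (Q (N j)), B, ?_⟩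
    refine Finset.sum_congr rfl fun j _ => ?_
    rw [← hNT j, hTQ (N j) (⋃ i, N i) (hsub j), ContinuousLinearMap.comp_assoc,
      ContinuousLinearMap.comp_assoc]
  calc c ≤ Metric.infDist (J.comp (T M)) (idealGenSingle (T (⋃ j, N j))) :=
        hdist n N hNmem
    _ ≤ _ := Metric.infDist_le_dist_of_mem hmem
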